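/- Let |q| < 1, |a|, |c|, |d| < 1, and let Q_n(x;c,d|q) be the monic-normalized Al-Salam–Chihara polynomials with generating function ∑_{n=0}^∞ Q_n(x;c,d|q) t^n/(q;q)_n = (ct, dt;q)_∞ / ((te^{iθ}, te^{-iθ};q)_∞), x = cos θ. Then the linear map (T_{a,c,d} f)(x) = ((ae^{iθ}, ae^{-iθ};q)_∞ / (ac, ad;q)_∞) ∑_{n=0}^∞ f(q^n) a^n Q_n(x;c,d|q)/(q;q)_n satisfies T_{a,c,d} x^k = (ae^{iθ}, ae^{-iθ};q)_k / ((ac;q)_k (ad;q)_k) for all k ≥ 0. -/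

import Mathlib

open Complex Finset

set_option maxHeartbeats 1000000
noncomputable section

/-- finite q-Pochhammer symbol (z;q)_k -/
def qPoch (z q : ℂ) (k : ℕ) : ℂ := ∏ j ∈ Finset.range k, (1 - z * q ^ j)

/-- infinite q-Pochhammer symbol (z;q)_∞ -/
def qPochInf (z q : ℂ) : ℂ := ∏' j : ℕ, (1 - z * q ^ j)

lemma norm_zq_lt {z q : ℂ} (hz : ‖z‖ < 1) (hq : ‖q‖ < 1) (j : ℕ) : ‖z * q ^ j‖ < 1 := by
  rw [norm_mul, norm_pow]
  calc ‖z‖ * ‖q‖ ^ j ≤ ‖z‖ * 1 := by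
        gcongr
        exact pow_le_one₀ (norm_nonneg q) hq.le
    _ < 1 := by simpa using hz

lemma factor_ne {z q : ℂ} (hz : ‖z‖ < 1) (hq : ‖q‖ < 1) (j : ℕ) : (1 - z * q ^ j) ≠ 0 := by
  intro h
  have : ‖z * q ^ j‖ = 1 := by
    have : z * q ^ j = 1 := by linear_combination -h
    simp [this]
  linarith [norm_zq_lt hz hq j]

lemma summable_log_aux {z q : ℂ} (hz : ‖z‖ < 1) (hq : ‖q‖ < 1) :
    Summable fun j : ℕ => Complex.log (1 - z * q ^ j) := by
  apply Summable.of_norm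
  have h1 : (0:ℝ) < 1 - ‖z‖ := by linarith
  have hble : ∀ j : ℕ, ‖Complex.log (1 - z * q ^ j)‖ ≤
      (‖z‖ * (1 - ‖z‖)⁻¹ / 2 + 1) * (‖z‖ * ‖q‖ ^ j) := by
    intro j
    have hw : ‖-(z * q ^ j)‖ < 1 := by simpa using norm_zq_lt hz hq j
    have hb := Complex.norm_log_one_add_le hw
    have hsub : (1 : ℂ) + -(z * q ^ j) = 1 - z * q ^ j := by ring
    rw [hsub] at hb
    refine hb.trans ?_
    have hwz : ‖-(z * q ^ j)‖ ≤ ‖z‖ := by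
      simp only [norm_neg, norm_mul, norm_pow]
      calc ‖z‖ * ‖q‖ ^ j ≤ ‖z‖ * 1 := by
            gcongr; exact pow_le_one₀ (norm_nonneg q) hq.le
        _ = ‖z‖ := by ring
    have hinv : (1 - ‖-(z * q ^ j)‖)⁻¹ ≤ (1 - ‖z‖)⁻¹ := by
      apply inv_anti₀ (by linarith) (by linarith)
    have hwn : ‖-(z * q ^ j)‖ = ‖z‖ * ‖q‖ ^ j := by simp [norm_mul, norm_pow]
    have h0 : 0 ≤ ‖-(z * q ^ j)‖ := norm_nonneg _
    calc ‖-(z * q ^ j)‖ ^ 2 * (1 - ‖-(z * q ^ j)‖)⁻¹ / 2 + ‖-(z * q ^ j)‖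
        ≤ ‖z‖ * ‖-(z * q ^ j)‖ * (1 - ‖z‖)⁻¹ / 2 + ‖-(z * q ^ j)‖ := by
          have hiw : 0 ≤ (1 - ‖-(z * q ^ j)‖)⁻¹ := inv_nonneg.2 (by linarith)
          have hiz : 0 ≤ (1 - ‖z‖)⁻¹ := inv_nonneg.2 (by linarith)
          have step1 : ‖-(z * q ^ j)‖ ^ 2 * (1 - ‖-(z * q ^ j)‖)⁻¹ ≤
              ‖z‖ * ‖-(z * q ^ j)‖ * (1 - ‖-(z * q ^ j)‖)⁻¹ := by
            apply mul_le_mul_of_nonneg_right _ hiw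
            nlinarith [h0, hwz]
          have step2 : ‖z‖ * ‖-(z * q ^ j)‖ * (1 - ‖-(z * q ^ j)‖)⁻¹ ≤
              ‖z‖ * ‖-(z * q ^ j)‖ * (1 - ‖z‖)⁻¹ := by
            apply mul_le_mul_of_nonneg_left hinv
            exact mul_nonneg (norm_nonneg z) h0
          linarith
      _ = (‖z‖ * (1 - ‖z‖)⁻¹ / 2 + 1) * ‖-(z * q ^ j)‖ := by ring
      _ = (‖z‖ * (1 - ‖z‖)⁻¹ / 2 + 1) * (‖z‖ * ‖q‖ ^ j) := by rw [hwn]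
  have hg : Summable fun j : ℕ => (‖z‖ * (1 - ‖z‖)⁻¹ / 2 + 1) * (‖z‖ * ‖q‖ ^ j) :=
    ((summable_geometric_of_lt_one (norm_nonneg q) hq).mul_left _).mul_left _
  exact Summable.of_nonneg_of_le (fun j => norm_nonneg _) hble hg

lemma hasProd_aux {z q : ℂ} (hz : ‖z‖ < 1) (hq : ‖q‖ < 1) :
    HasProd (fun j : ℕ => 1 - z * q ^ j) (qPochInf z q) := by
  have := (Complex.multipliable_of_summable_log (summable_log_aux hz hq)).hasProd
  exact this

lemma multipliable_aux {z q : ℂ} (hz : ‖z‖ < 1) (hq : ‖q‖ < 1) :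
    Multipliable fun j : ℕ => 1 - z * q ^ j := ⟨_, hasProd_aux hz hq⟩

lemma qPochInf_ne_zero {z q : ℂ} (hz : ‖z‖ < 1) (hq : ‖q‖ < 1) : qPochInf z q ≠ 0 := by
  have h := Complex.cexp_tsum_eq_tprod (fun j => factor_ne hz hq j) (summable_log_aux hz hq)
  have := h
  rw [qPochInf, ← this]
  exact Complex.exp_ne_zero _

lemma qPoch_ne_zero {z q : ℂ} (hz : ‖z‖ < 1) (hq : ‖q‖ < 1) (k : ℕ) : qPoch z q k ≠ 0 := by
  rw [qPoch]
  exact Finset.prod_ne_zero_iff.2 (fun j _ => factor_ne hz hq j)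

lemma qPochInf_split {z q : ℂ} (hz : ‖z‖ < 1) (hq : ‖q‖ < 1) (k : ℕ) :
    qPochInf z q = qPoch z q k * qPochInf (z * q ^ k) q := by
  have hzk : ‖z * q ^ k‖ < 1 := norm_zq_lt hz hq k
  have hm0 := multipliable_aux hzk hq
  have heq : (fun j : ℕ => 1 - z * q ^ k * q ^ j) = fun j : ℕ => 1 - z * q ^ (j + k) :=
    funext fun j => by rw [pow_add]; ring
  rw [heq] at hm0
  have hp := Multipliable.prod_mul_tprod_nat_mul' (f := fun j : ℕ => 1 - z * q ^ j) (k := k) hm0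
  have h2 : (∏' j : ℕ, (1 - z * q ^ (j + k))) = ∏' j : ℕ, (1 - z * q ^ k * q ^ j) :=
    tprod_congr fun j => by rw [pow_add]; ring
  rw [qPochInf, qPoch, qPochInf, ← hp, h2]

lemma norm_mul_lt_one {x y : ℂ} (hx : ‖x‖ < 1) (hy : ‖y‖ < 1) : ‖x * y‖ < 1 := by
  rw [norm_mul]
  nlinarith [norm_nonneg x, norm_nonneg y]

lemma alg_lemma (N1 N2 D1 D2 I1 I2 I3 I4 : ℂ) (hD1 : D1 ≠ 0) (hD2 : D2 ≠ 0)
    (hI1 : I1 ≠ 0) (hI2 : I2 ≠ 0) (hI3 : I3 ≠ 0) (hI4 : I4 ≠ 0) :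
    (N1 * I1 * (N2 * I2)) / (D1 * I3 * (D2 * I4)) * ((I3 * I4) / (I1 * I2)) =
      N1 * N2 / (D1 * D2) := by
  field_simp

/-- the transform built from the (normalized) Al-Salam–Chihara polynomials
Q_n(x;c,d|q) (defined by their generating function) satisfies
T_{a,c,d} x^k = (ae^{iθ},ae^{-iθ};q)_k / ((ac;q)_k (ad;q)_k). -/
theorem stmt7 (q a c d : ℂ) (hq : ‖q‖ < 1) (ha : ‖a‖ < 1) (hc : ‖c‖ < 1) (hd : ‖d‖ < 1)
    (Q : ℕ → ℂ → ℂ)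
    (hQ : ∀ (t : ℂ) (θ : ℝ), ‖t‖ < 1 →
      HasSum (fun n : ℕ => Q n (Real.cos θ : ℂ) * t ^ n / qPoch q q n)
        (qPochInf (c * t) q * qPochInf (d * t) q /
          (qPochInf (t * Complex.exp (θ * Complex.I)) q *
            qPochInf (t * Complex.exp (-θ * Complex.I)) q)))
    (k : ℕ) (θ : ℝ) :
    qPochInf (a * Complex.exp (θ * Complex.I)) q * qPochInf (a * Complex.exp (-θ * Complex.I)) q /
        (qPochInf (a * c) q * qPochInf (a * d) q) *
        ∑' n : ℕ, (q ^ n) ^ k * a ^ n * Q n (Real.cos θ : ℂ) / qPoch q q n =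
      qPoch (a * Complex.exp (θ * Complex.I)) q k *
        qPoch (a * Complex.exp (-θ * Complex.I)) q k /
        (qPoch (a * c) q k * qPoch (a * d) q k) := by
  set E : ℂ := Complex.exp (θ * Complex.I) with hEdef
  set E' : ℂ := Complex.exp (-θ * Complex.I) with hE'def
  have hE : ‖E‖ = 1 := by
    rw [hEdef, Complex.norm_exp_ofReal_mul_I]
  have hE' : ‖E'‖ = 1 := by
    rw [hE'def, show (-(θ:ℂ)) = ((-θ : ℝ) : ℂ) by push_cast; ring,
      Complex.norm_exp_ofReal_mul_I]
  have haE : ‖a * E‖ < 1 := by rw [norm_mul, hE, mul_one]; exact ha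
  have haE' : ‖a * E'‖ < 1 := by rw [norm_mul, hE', mul_one]; exact ha
  have hac : ‖a * c‖ < 1 := norm_mul_lt_one ha hc
  have had : ‖a * d‖ < 1 := norm_mul_lt_one ha hd
  have hak : ‖a * q ^ k‖ < 1 := norm_zq_lt ha hq k
  have hsum := hQ (a * q ^ k) θ hak
  -- rewrite the tsum
  have hfun : (fun n : ℕ => (q ^ n) ^ k * a ^ n * Q n (Real.cos θ : ℂ) / qPoch q q n) =
      fun n : ℕ => Q n (Real.cos θ : ℂ) * (a * q ^ k) ^ n / qPoch q q n := by
    funext n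
    rw [mul_pow, ← pow_mul, ← pow_mul, Nat.mul_comm k n]
    ring
  have htsum : ∑' n : ℕ, (q ^ n) ^ k * a ^ n * Q n (Real.cos θ : ℂ) / qPoch q q n =
      qPochInf (c * (a * q ^ k)) q * qPochInf (d * (a * q ^ k)) q /
        (qPochInf (a * q ^ k * E) q * qPochInf (a * q ^ k * E') q) := by
    rw [hfun]
    exact hsum.tsum_eq
  rw [htsum]
  -- normalize the shifted arguments
  have e1 : c * (a * q ^ k) = a * c * q ^ k := by ring
  have e2 : d * (a * q ^ k) = a * d * q ^ k := by ring
  have e3 : a * q ^ k * E = a * E * q ^ k := by ring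
  have e4 : a * q ^ k * E' = a * E' * q ^ k := by ring
  rw [e1, e2, e3, e4]
  -- split the infinite products
  rw [qPochInf_split haE hq k, qPochInf_split haE' hq k,
    qPochInf_split hac hq k, qPochInf_split had hq k]
  exact alg_lemma _ _ _ _ _ _ _ _
    (qPoch_ne_zero hac hq k) (qPoch_ne_zero had hq k)
    (qPochInf_ne_zero (norm_zq_lt haE hq k) hq) (qPochInf_ne_zero (norm_zq_lt haE' hq k) hq)
    (qPochInf_ne_zero (norm_zq_lt hac hq k) hq) (qPochInf_ne_zero (norm_zq_lt had hq k) hq)
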